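/- arXiv:math/0503051 — 4 statements merged into one kernel-verified Lean document; each statement's English description precedes it below -/
import Mathlib

section
/- Let R be the ring of integers in a nonarchimedean local field k with uniformizer ϖ, V a finite-dimensional k-vector space, L a lattice (finitely generated R-submodule spanning V) in V, and T : V → V a diagonalizable k-linear map with T(L) = ϖ^r L for some integer r. Let α₁,…,α_ℓ be the eigenvalues of T with eigenspaces V₁,…,V_ℓ, and suppose that for i ≠ j we have α_i ≢ α_j mod ϖ^{r+1}R. Then L = ⊕_{i=1}^ℓ (L ∩ V_i). -/
/-! `S = ϖ⁻ʳ T` maps `L` into itself, so its eigenvalue `βᵢ = ϖ⁻ʳ αᵢ` on the nonzero, finitely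
generated, `S`-stable module `L ∩ Vᵢ` is integral over `R`, hence lies in `R`. The separation
hypothesis says that the `βᵢ` are pairwise incongruent mod `ϖ`, i.e. their differences are units.
For `v = ∑ vᵢ ∈ L` the operator `∏_{j ≠ i} (S - βⱼ)` preserves `L` and sends `v` to a unit
multiple of `vᵢ`, so every `vᵢ` lies in `L`. -/

open Polynomial

theorem Submodule.mem_of_sum_mem_of_isUnit_sub {R M ι : Type*} [CommRing R] [AddCommGroup M]
    [Module R M] [Fintype ι] [DecidableEq ι] {f : Module.End R M} {p : Submodule R M}
    (hp : p ≤ p.comap f) {μ : ι → R} (hμ : Pairwise fun i j ↦ IsUnit (μ i - μ j))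
    {x : ι → M} (hx : ∀ i, f (x i) = μ i • x i) (hsum : ∑ i, x i ∈ p) (i : ι) : x i ∈ p := by
  -- `q` kills every `x j` with `j ≠ i` and scales `x i` by a unit.
  let q : R[X] := ∏ j ∈ Finset.univ.erase i, (X - C (μ j))
  have hq : aeval f q (∑ j, x j) = q.eval (μ i) • x i := by
    rw [map_sum, Finset.sum_eq_single i]
    · exact Module.End.aeval_apply_of_mem_apply_eq_smul (hx i)
    · intro j _ hji
      rw [Module.End.aeval_apply_of_mem_apply_eq_smul (hx j), eval_prod,
        Finset.prod_eq_zero (Finset.mem_erase.2 ⟨hji, Finset.mem_univ j⟩) (by simp), zero_smul]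
    · simp
  have hunit : IsUnit (q.eval (μ i)) := by
    simp only [q, eval_prod, eval_sub, eval_X, eval_C, IsUnit.prod_iff, Finset.mem_erase]
    exact fun j hj ↦ hμ (Ne.symm hj.1)
  rw [← p.smul_mem_iff_of_isUnit hunit, ← hq]
  exact aeval_apply_smul_mem_of_le_comap hsum q f hp

theorem Irreducible.dvd_of_not_isUnit {R : Type*} [CommRing R] [IsDomain R]
    [IsDiscreteValuationRing R] {ϖ a : R} (hϖ : Irreducible ϖ) (ha : ¬IsUnit a) : ϖ ∣ a := by
  rwa [← Ideal.mem_span_singleton, ← hϖ.maximalIdeal_eq]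

section Lattice

variable {R k V : Type*} [CommRing R] [Field k] [Algebra R k]
  [AddCommGroup V] [Module k V] [Module R V] [IsScalarTower R k V]

theorem smul_inv_mem_of_map_le {L : Submodule R V} {T : Module.End k V} {c : k} (hc : c ≠ 0)
    (h : L.map (T.restrictScalars R) ≤
      L.map ((c • LinearMap.id : Module.End k V).restrictScalars R))
    {x : V} (hx : x ∈ L) : c⁻¹ • T x ∈ L := by
  obtain ⟨y, hy, hxy⟩ := h ⟨x, hx, rfl⟩
  simp only [LinearMap.coe_restrictScalars, LinearMap.smul_apply, LinearMap.id_apply] at hxy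
  rwa [← hxy, inv_smul_smul₀ hc]

theorem exists_algebraMap_eq_of_apply_eq_smul [IsDomain R] [IsNoetherianRing R]
    [IsIntegrallyClosed R] [IsFractionRing R k] {L : Submodule R V} (hL : L.FG)
    (hspan : Submodule.span k (L : Set V) = ⊤)
    {f : Module.End k V} (hf : ∀ x ∈ L, f x ∈ L) {β : k} {w : V} (hw : w ≠ 0)
    (hfw : f w = β • w) : ∃ b : R, algebraMap R k b = β := by
  obtain ⟨d, hd⟩ := multiple_mem_span_of_mem_localization_span (nonZeroDivisors R) k
    (L : Set V) w (hspan ▸ Submodule.mem_top)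
  rw [Submodule.span_eq, Submonoid.smul_def, ← algebraMap_smul k] at hd
  have hd0 : algebraMap R k d ≠ 0 := IsFractionRing.to_map_ne_zero_of_mem_nonZeroDivisors d.2
  let N := L ⊓ (f.eigenspace β).restrictScalars R
  have hN : N ≠ ⊥ := (Submodule.ne_bot_iff N).2
    ⟨_, ⟨hd, Submodule.smul_mem _ _ (Module.End.mem_eigenspace_iff.2 hfw)⟩, smul_ne_zero hd0 hw⟩
  refine IsIntegrallyClosed.isIntegral_iff.1 <|
    isIntegral_of_smul_mem_submodule N hN (hL.of_le inf_le_left) β fun n ⟨hnL, hn⟩ ↦ ⟨?_, ?_⟩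
  · rw [← Module.End.mem_eigenspace_iff.1 hn]; exact hf n hnL
  · exact Submodule.smul_mem _ β hn

end Lattice

theorem lattice_eigenspace_decomposition_general
    (R : Type*) [CommRing R] [IsDomain R] [IsDiscreteValuationRing R]
    (k : Type*) [Field k] [Algebra R k] [IsFractionRing R k]
    (ϖ : R) (hϖ : Irreducible ϖ)
    (V : Type*) [AddCommGroup V] [Module k V] [Module R V] [IsScalarTower R k V]
    (L : Submodule R V) (hLfg : L.FG)
    (hLspan : Submodule.span k (L : Set V) = ⊤)
    (T : Module.End k V) (r : ℤ)
    (hTL : L.map ((T : V →ₗ[k] V).restrictScalars R)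
      = L.map (((algebraMap R k ϖ ^ r) • (LinearMap.id : V →ₗ[k] V)).restrictScalars R))
    (ℓ : ℕ) (α : Fin ℓ → k)
    (hαev : ∀ i, T.HasEigenvalue (α i))
    (hdiag : (⨆ i, T.eigenspace (α i)) = ⊤)
    (hsep : ∀ i j, i ≠ j →
      ¬ ∃ c : R, α i - α j = algebraMap R k ϖ ^ (r + 1) * algebraMap R k c) :
    L = ⨆ i, L ⊓ (T.eigenspace (α i)).restrictScalars R := by
  classical
  set π := algebraMap R k ϖ
  have hπ : π ≠ 0 := (map_ne_zero_iff _ (IsFractionRing.injective R k)).2 hϖ.ne_zero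
  let S : Module.End k V := (π ^ r)⁻¹ • T
  have hSL : ∀ x ∈ L, S x ∈ L := fun x hx ↦ smul_inv_mem_of_map_le (zpow_ne_zero r hπ) hTL.le hx
  have hS : ∀ i, ∀ x ∈ T.eigenspace (α i), S x = ((π ^ r)⁻¹ * α i) • x := fun i x hx ↦ by
    rw [LinearMap.smul_apply, Module.End.mem_eigenspace_iff.1 hx, smul_smul]
  choose b hb using fun i ↦
    have ⟨w, hw⟩ := (hαev i).exists_hasEigenvector
    exists_algebraMap_eq_of_apply_eq_smul hLfg hLspan hSL hw.2 (hS i w hw.1)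
  have hb_unit : Pairwise fun i j ↦ IsUnit (b i - b j) := by
    intro i j hij
    by_contra hunit
    obtain ⟨c, hc⟩ := hϖ.dvd_of_not_isUnit hunit
    have hα : ∀ m, α m = π ^ r * algebraMap R k (b m) := fun m ↦ by
      rw [hb, mul_inv_cancel_left₀ (zpow_ne_zero r hπ)]
    refine hsep i j hij ⟨c, ?_⟩
    rw [hα i, hα j, ← mul_sub, ← map_sub, hc, map_mul, zpow_add_one₀ hπ, mul_assoc]
  refine le_antisymm (fun v hv ↦ ?_) (iSup_le fun i ↦ inf_le_left)
  obtain ⟨x, hx, rfl⟩ := (Submodule.mem_iSup_iff_exists_finsupp _ v).1 (hdiag ▸ Submodule.mem_top)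
  rw [Finsupp.sum_fintype _ _ fun _ ↦ rfl] at hv ⊢
  have hxL : ∀ i, x i ∈ L := Submodule.mem_of_sum_mem_of_isUnit_sub (f := S.restrictScalars R)
    hSL hb_unit (fun i ↦ by simp [hS i _ (hx i), ← hb]) hv
  exact Submodule.sum_mem _ fun i _ ↦ Submodule.mem_iSup_of_mem i ⟨hxL i, hx i⟩

/-- Lattice decomposition (Lemma `lem:lattice-decomp`): if R is the ring of
integers (a DVR) with uniformizer ϖ and fraction field k, L a lattice in a
finite-dimensional k-vector space V, and T a diagonalizable k-linear map with
T(L) = ϖ^r L, whose eigenvalues are pairwise incongruent mod ϖ^{r+1}R, then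
L is the (direct) sum of its intersections with the eigenspaces of T. -/
theorem lattice_eigenspace_decomposition
    (R : Type*) [CommRing R] [IsDomain R] [IsDiscreteValuationRing R]
    (k : Type*) [Field k] [Algebra R k] [IsFractionRing R k]
    (ϖ : R) (hϖ : Irreducible ϖ)
    (V : Type*) [AddCommGroup V] [Module k V] [Module R V] [IsScalarTower R k V]
    [FiniteDimensional k V]
    (L : Submodule R V) (hLfg : L.FG)
    (hLspan : Submodule.span k (L : Set V) = ⊤)
    (T : Module.End k V) (r : ℤ)
    (hTL : L.map ((T : V →ₗ[k] V).restrictScalars R)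
      = L.map (((algebraMap R k ϖ ^ r) • (LinearMap.id : V →ₗ[k] V)).restrictScalars R))
    (ℓ : ℕ) (α : Fin ℓ → k) (hαinj : Function.Injective α)
    (hαev : ∀ i, T.HasEigenvalue (α i))
    (hdiag : (⨆ i, T.eigenspace (α i)) = ⊤)
    (hsep : ∀ i j, i ≠ j →
      ¬ ∃ c : R, α i - α j = algebraMap R k ϖ ^ (r + 1) * algebraMap R k c) :
    L = ⨆ i, L ⊓ (T.eigenspace (α i)).restrictScalars R :=
  lattice_eigenspace_decomposition_general R k ϖ hϖ V L hLfg hLspan T r hTL ℓ α hαev hdiag hsep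
end

section
/- Let k be a field with valuation ν, and let m be a linear operator on a finite-dimensional k-vector space W (thought of as g/m) that is diagonalizable with all eigenvalues β satisfying ν(β − 1) > c, where c = max over eigenvalues α ≠ 1 of a commuting diagonalizable operator γ of max{0, ν(α − 1)}. Then the operator γm (composition) has s(γm) = s(γ), where s(x) := max over generalized eigenvalues λ of x of max{0, ν(λ − 1)}. -/
/-!
Since `γ` and `m` commute and are diagonalizable, each eigenvalue of `γ * m` is `α * β` for a
common eigenvector of `γ` (eigenvalue `α`) and `m` (eigenvalue `β`), and each eigenvalue `α` of
`γ` occurs in such a pair. From `α * β - 1 = (α - 1) + α * (β - 1)` and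
`ν (β - 1) > max 0 (ν (α - 1))` the second summand has strictly larger valuation, so
`ν (α * β - 1) = ν (α - 1)`.
-/

namespace AddValuation

variable {R Γ₀ : Type*} [Ring R] [LinearOrderedAddCommGroupWithTop Γ₀]
  (v : AddValuation R Γ₀)

theorem map_mul_sub_one_of_lt {α β : R} (h : max 0 (v (α - 1)) < v (β - 1)) :
    v (α * β - 1) = v (α - 1) := by
  have hlt : v (α - 1) < v α + v (β - 1) := by
    rcases le_or_gt 0 (v (α - 1)) with h0 | h0
    · have hvα : 0 ≤ v α := by simpa [min_eq_right h0] using v.map_add (α - 1) 1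
      rw [max_eq_right h0] at h
      exact h.trans_le (le_add_of_nonneg_left hvα)
    · have hvα : v α = v (α - 1) := by
        simpa using v.map_add_eq_of_lt_left (x := α - 1) (y := 1) (by simpa using h0)
      rw [max_eq_left h0.le] at h
      rw [hvα]
      simpa using (add_lt_add_iff_right_of_ne_top (h0.trans_le le_top).ne).2 h
  rw [show α * β - 1 = (α - 1) + α * (β - 1) by noncomm_ring,
    v.map_add_eq_of_lt_left (by rwa [v.map_mul])]

end AddValuation

namespace Module.End

variable {K V : Type*} [Field K] [AddCommGroup V] [Module K V]

theorem exists_hasEigenvector_mem_of_iSup_eigenspace_eq_top [FiniteDimensional K V]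
    {f : End K V} (hf : ⨆ μ, f.eigenspace μ = ⊤) {p : Submodule K V} (hp : p ≠ ⊥)
    (hfp : ∀ x ∈ p, f x ∈ p) : ∃ μ v, v ∈ p ∧ f.HasEigenvector μ v := by
  have hsplit : ⨆ μ, p ⊓ f.eigenspace μ = p := by
    rw [← Submodule.inf_iSup_genEigenspace hfp, hf, inf_top_eq]
  obtain ⟨μ, hμ⟩ : ∃ μ, p ⊓ f.eigenspace μ ≠ ⊥ := by
    by_contra! h
    exact hp (by rw [← hsplit]; simp [h])
  obtain ⟨v, ⟨hvp, hvμ⟩, hv0⟩ := Submodule.exists_mem_ne_zero_of_ne_bot hμ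
  exact ⟨μ, v, hvp, hvμ, hv0⟩

theorem HasEigenvector.mul {f g : End K V} {α β : K} {v : V} (hf : f.HasEigenvector α v)
    (hg : g.HasEigenvector β v) : (f * g).HasEigenvector (α * β) v := by
  refine ⟨mem_eigenspace_iff.2 ?_, hf.2⟩
  rw [mul_apply, hg.apply_eq_smul, map_smul, hf.apply_eq_smul, smul_smul, mul_comm]

theorem HasEigenvector.eq {f : End K V} {α β : K} {v : V} (hα : f.HasEigenvector α v)
    (hβ : f.HasEigenvector β v) : α = β := by
  have : (α - β) • v = 0 := by
    rw [sub_smul, ← hα.apply_eq_smul, ← hβ.apply_eq_smul, sub_self]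
  exact sub_eq_zero.1 ((smul_eq_zero.1 this).resolve_right hα.2)

end Module.End

open Module.End

theorem singular_depth_product_general
    (k : Type*) [Field k] (ν : AddValuation k (WithTop ℤ))
    (W : Type*) [AddCommGroup W] [Module k W] [FiniteDimensional k W]
    (γ m : Module.End k W) (hcomm : Commute γ m)
    (hγdiag : (⨆ α : k, γ.eigenspace α) = ⊤)
    (hmdiag : (⨆ β : k, m.eigenspace β) = ⊤)
    (c : WithTop ℤ)
    (hub : ∀ α : k, γ.HasEigenvalue α → max 0 (ν (α - 1)) ≤ c)
    (hatt : ∃ α : k, γ.HasEigenvalue α ∧ max 0 (ν (α - 1)) = c)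
    (hmev : ∀ β : k, m.HasEigenvalue β → c < ν (β - 1)) :
    (∀ lam : k, (γ * m).HasEigenvalue lam → max 0 (ν (lam - 1)) ≤ c) ∧
    (∃ lam : k, (γ * m).HasEigenvalue lam ∧ max 0 (ν (lam - 1)) = c) := by
  have depth_mul {α β : k} {v : W} (hα : γ.HasEigenvector α v) (hβ : m.HasEigenvector β v) :
      max 0 (ν (α * β - 1)) = max 0 (ν (α - 1)) := by
    rw [ν.map_mul_sub_one_of_lt ((hub α (hasEigenvalue_of_hasEigenvector hα)).trans_lt
      (hmev β (hasEigenvalue_of_hasEigenvector hβ)))]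
  constructor
  · intro lam hlam
    obtain ⟨α, u, hu, huγ⟩ := exists_hasEigenvector_mem_of_iSup_eigenspace_eq_top hγdiag hlam
      fun x hx ↦ mapsTo_genEigenspace_of_comm ((Commute.refl γ).mul_right hcomm).symm lam 1 hx
    have hne : (γ * m).eigenspace lam ⊓ γ.eigenspace α ≠ ⊥ :=
      (Submodule.ne_bot_iff _).2 ⟨u, ⟨hu, huγ.1⟩, huγ.2⟩
    obtain ⟨β, v, ⟨hvlam, hvα⟩, hvm⟩ :=
      exists_hasEigenvector_mem_of_iSup_eigenspace_eq_top hmdiag hne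
        fun x hx ↦ ⟨mapsTo_genEigenspace_of_comm (hcomm.mul_left (Commute.refl m)) lam 1 hx.1,
          mapsTo_genEigenspace_of_comm hcomm α 1 hx.2⟩
    have hα : γ.HasEigenvector α v := ⟨hvα, hvm.2⟩
    rw [HasEigenvector.eq ⟨hvlam, hvm.2⟩ (hα.mul hvm), depth_mul hα hvm]
    exact hub α (hasEigenvalue_of_hasEigenvector hα)
  · obtain ⟨α, hα, rfl⟩ := hatt
    obtain ⟨β, v, hvα, hvm⟩ := exists_hasEigenvector_mem_of_iSup_eigenspace_eq_top hmdiag hα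
      fun x hx ↦ mapsTo_genEigenspace_of_comm hcomm α 1 hx
    have hα : γ.HasEigenvector α v := ⟨hvα, hvm.2⟩
    exact ⟨α * β, hasEigenvalue_of_hasEigenvector (hα.mul hvm), depth_mul hα hvm⟩

/-- Singular depth of a product: if γ and m are commuting diagonalizable
operators, c = s(γ) = max over eigenvalues α of γ of max{0, ν(α−1)}, and every
eigenvalue β of m satisfies ν(β − 1) > c, then s(γm) = c = s(γ); i.e. c is an
upper bound for, and is attained by, max{0, ν(λ−1)} over eigenvalues λ of γm. -/
theorem singular_depth_product
    (k : Type*) [Field k] (ν : AddValuation k (WithTop ℤ))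
    (W : Type*) [AddCommGroup W] [Module k W] [FiniteDimensional k W]
    (γ m : Module.End k W) (hcomm : Commute γ m)
    (hγbij : Function.Bijective γ) (hmbij : Function.Bijective m)
    (hγdiag : (⨆ α : k, γ.eigenspace α) = ⊤)
    (hmdiag : (⨆ β : k, m.eigenspace β) = ⊤)
    (c : WithTop ℤ)
    (hub : ∀ α : k, γ.HasEigenvalue α → max 0 (ν (α - 1)) ≤ c)
    (hatt : ∃ α : k, γ.HasEigenvalue α ∧ max 0 (ν (α - 1)) = c)
    (hmev : ∀ β : k, m.HasEigenvalue β → c < ν (β - 1)) :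
    (∀ lam : k, (γ * m).HasEigenvalue lam → max 0 (ν (lam - 1)) ≤ c) ∧
    (∃ lam : k, (γ * m).HasEigenvalue lam ∧ max 0 (ν (lam - 1)) = c) :=
  singular_depth_product_general k ν W γ m hcomm hγdiag hmdiag c hub hatt hmev
end

section
/- Let (k, ν) be a valued field, W a finite-dimensional k-vector space with a decreasing filtration by subgroups W_r (r ∈ ℝ) satisfying W_r ⊇ W_s for r ≤ s and α·W_r ⊆ W_{r+ν(α)} for α ∈ k^×. Let γ be an automorphism of W preserving each W_r, diagonalizable with eigenvalues α_i ≠ 1 satisfying ν(α_i − 1) ≤ c, and suppose the eigenspace decomposition is compatible with the filtration: W_r = ⊕_i (W_r ∩ W^{α_i}) where W^{α_i} is the α_i-eigenspace. If Z ∈ W lies in W_{−t} but not in ∪_{s > −t} W_s, then γZ − Z ∉ ∪_{s > −t + c} W_s. -/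
/-!
If `γZ - Z = ∑ gᵢ` with `gᵢ ∈ W_s` an `αᵢ`-eigenvector, then `X = ∑ (αᵢ - 1)⁻¹ gᵢ` satisfies
`γX - X = γZ - Z`, and `X ∈ W_{s-c}` because `ν((αᵢ - 1)⁻¹) ≥ -c`. Since `1` is not an
eigenvalue of the diagonalizable `γ`, the map `γ - 1` is injective, so `X = Z`; hence `Z` would lie
in `W_{s-c}` with `s - c > -t`.
-/

namespace Module.End

variable {K V : Type*} [Field K] [AddCommGroup V] [Module K V]

theorem eigenspace_eq_bot_of_iSup_eigenspace_eq_top {ι : Type*} {f : End K V} {α : ι → K}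
    {μ : K} (hα : ∀ i, α i ≠ μ) (hdiag : ⨆ i, f.eigenspace (α i) = ⊤) :
    f.eigenspace μ = ⊥ := by
  have hle : ⊤ ≤ ⨆ (ν : K) (_ : ν ≠ μ), f.eigenspace ν :=
    hdiag ▸ iSup_le fun i => le_iSup₂_of_le (α i) (hα i) le_rfl
  exact disjoint_top.mp ((iSupIndep_def.mp f.eigenspaces_iSupIndep μ).mono_right hle)

theorem eq_of_apply_sub_self_eq {f : End K V} (h : f.eigenspace 1 = ⊥) {x y : V}
    (hxy : f x - x = f y - y) : x = y := by
  have hmem : x - y ∈ f.eigenspace 1 := by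
    rw [mem_eigenspace_iff, one_smul, map_sub]
    exact sub_eq_sub_iff_sub_eq_sub.mpr hxy
  simpa [h, sub_eq_zero] using hmem

theorem apply_sub_self_smul_inv_sub_one {f : End K V} {a : K} {g : V}
    (hg : g ∈ f.eigenspace a) (ha : a ≠ 1) :
    f ((a - 1)⁻¹ • g) - (a - 1)⁻¹ • g = g := by
  rw [map_smul, mem_eigenspace_iff.mp hg, smul_smul, ← sub_smul,
    ← mul_sub_one, inv_mul_cancel₀ (sub_ne_zero.mpr ha), one_smul]

end Module.End

theorem smul_inv_mem_of_valuation_le {k W : Type*} [Field k] [AddCommGroup W] [Module k W]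
    {ν : AddValuation k (WithTop ℤ)} {Wf : ℝ → AddSubgroup W}
    (hdec : ∀ r s : ℝ, r ≤ s → Wf s ≤ Wf r)
    (hscal : ∀ (a : k) (n : ℤ), ν a = (n : WithTop ℤ) →
      ∀ (r : ℝ), ∀ x ∈ Wf r, a • x ∈ Wf (r + n))
    {a : k} (ha : a ≠ 0) {c : ℤ} (hac : ν a ≤ c) {s : ℝ} {x : W} (hx : x ∈ Wf s) :
    a⁻¹ • x ∈ Wf (s - c) := by
  obtain ⟨m, hm⟩ := WithTop.ne_top_iff_exists.mp ((ν.ne_top_iff).mpr ha)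
  have hmc : (m : ℝ) ≤ c := by exact_mod_cast (WithTop.coe_le_coe.mp (hm ▸ hac))
  have hinv : ν a⁻¹ = ((-m : ℤ) : WithTop ℤ) := by
    rw [ν.map_inv, ← hm]; rfl
  refine hdec _ _ ?_ (hscal _ _ hinv s x hx)
  push_cast
  linarith

theorem Z_gamma_filtration_general
    (k : Type*) [Field k] (ν : AddValuation k (WithTop ℤ))
    (W : Type*) [AddCommGroup W] [Module k W]
    (Wf : ℝ → AddSubgroup W)
    (hdec : ∀ r s : ℝ, r ≤ s → Wf s ≤ Wf r)
    (hscal : ∀ (a : k) (n : ℤ), ν a = (n : WithTop ℤ) →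
      ∀ (r : ℝ), ∀ x ∈ Wf r, a • x ∈ Wf (r + n))
    (γ : Module.End k W)
    (ι : Type*) [Fintype ι] (α : ι → k)
    (hα1 : ∀ i, α i ≠ 1)
    (c : ℤ)
    (hαc : ∀ i, ν (α i - 1) ≤ (c : WithTop ℤ))
    (hdiag : (⨆ i, γ.eigenspace (α i)) = ⊤)
    (hcompat : ∀ (r : ℝ), ∀ x ∈ Wf r, ∃ f : ι → W,
      (∀ i, f i ∈ Wf r ∧ f i ∈ γ.eigenspace (α i)) ∧ x = ∑ i, f i)
    (t : ℝ) (Z : W)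
    (hZdeep : ∀ s : ℝ, -t < s → Z ∉ Wf s) :
    ∀ s : ℝ, -t + c < s → γ Z - Z ∉ Wf s := by
  intro s hs hmem
  obtain ⟨g, hg, hsum⟩ := hcompat s _ hmem
  set X : W := ∑ i, (α i - 1)⁻¹ • g i
  have hX : X ∈ Wf (s - c) := AddSubgroup.sum_mem _ fun i _ =>
    smul_inv_mem_of_valuation_le hdec hscal (sub_ne_zero.mpr (hα1 i)) (hαc i) (hg i).1
  have hγX : γ X - X = γ Z - Z := by
    rw [hsum, map_sum, ← Finset.sum_sub_distrib]
    exact Finset.sum_congr rfl fun i _ =>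
      Module.End.apply_sub_self_smul_inv_sub_one (hg i).2 (hα1 i)
  have hXZ : X = Z := Module.End.eq_of_apply_sub_self_eq
    (Module.End.eigenspace_eq_bot_of_iSup_eigenspace_eq_top hα1 hdiag) hγX
  exact hZdeep (s - c) (by linarith) (hXZ ▸ hX)

/-- Abstraction of Lemma `Z-gamma`: let W carry a decreasing filtration by
additive subgroups compatible with the valuation and with the eigenspace
decomposition of a diagonalizable automorphism γ whose eigenvalues α_i ≠ 1
satisfy 0 ≤ ν(α_i − 1) ≤ c. If Z lies in W₋ₜ but in no deeper W_s (s > −t),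
then γZ − Z lies in no W_s with s > −t + c. -/
theorem Z_gamma_filtration
    (k : Type*) [Field k] (ν : AddValuation k (WithTop ℤ))
    (W : Type*) [AddCommGroup W] [Module k W] [FiniteDimensional k W]
    (Wf : ℝ → AddSubgroup W)
    (hdec : ∀ r s : ℝ, r ≤ s → Wf s ≤ Wf r)
    (hscal : ∀ (a : k) (n : ℤ), ν a = (n : WithTop ℤ) →
      ∀ (r : ℝ), ∀ x ∈ Wf r, a • x ∈ Wf (r + n))
    (γ : Module.End k W) (hγbij : Function.Bijective γ)
    (hpres : ∀ (r : ℝ), ∀ x ∈ Wf r, γ x ∈ Wf r)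
    (ι : Type*) [Fintype ι] (α : ι → k)
    (hα1 : ∀ i, α i ≠ 1)
    (c : ℤ)
    (hα0 : ∀ i, (0 : WithTop ℤ) ≤ ν (α i - 1))
    (hαc : ∀ i, ν (α i - 1) ≤ (c : WithTop ℤ))
    (hdiag : (⨆ i, γ.eigenspace (α i)) = ⊤)
    (hcompat : ∀ (r : ℝ), ∀ x ∈ Wf r, ∃ f : ι → W,
      (∀ i, f i ∈ Wf r ∧ f i ∈ γ.eigenspace (α i)) ∧ x = ∑ i, f i)
    (t : ℝ) (Z : W)
    (hZ : Z ∈ Wf (-t)) (hZdeep : ∀ s : ℝ, -t < s → Z ∉ Wf s) :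
    ∀ s : ℝ, -t + c < s → γ Z - Z ∉ Wf s :=
  Z_gamma_filtration_general k ν W Wf hdec hscal γ ι α hα1 c hαc hdiag hcompat t Z hZdeep
end

section
/- Let V be a complex inner product space with an orthogonal projection E onto a finite-dimensional subspace V_d, and let π be a unitary-on-V_d representation of a group G on V. Suppose that the function Θ(g) = tr(E π(g) E) satisfies Θ(k₁ x k₂) expressed both as ∑_j ⟨π(k₁) E π(x k₂) v_j, v_j⟩ and (by conjugation invariance Θ(k₁xk₂) = Θ(k₂k₁x)) as ∑_j ⟨π(k₂) E π(k₁ x) v_j, v_j⟩ for an orthonormal basis {v_j} of V_d and k₁, k₂ in a subgroup K under which E is equivariant. If Θ(x) ≠ 0, then the map k ↦ E π(k) acting on V_d defines a nonzero intertwiner between the K ∩ xKx⁻¹-representations d and ˣd, i.e., Hom_{K ∩ xKx⁻¹}(d, ˣd) ≠ 0, where d is the representation of K on V_d and ˣd(xkx⁻¹) := d(k). -/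
/-!
A nonzero trace makes the compression `A = E π(x) E` of `π(x)` to `V_d` nonzero, and since
`x (x⁻¹ g x) = g x` and `E` commutes with `π(K)`, `A` intertwines `d(x⁻¹ g x)` with `d(g)`.
Both are unitary on `V_d`, so taking adjoints shows that `A*` intertwines `d(g)` with
`d(x⁻¹ g x)`; extended by `E` to all of `V`, it is the required nonzero intertwiner.
-/

open LinearMap

theorem star_mul_eq_mul_star_of_mul_eq_mul {R : Type*} [Monoid R] [StarMul R] {a s t : R}
    (hs : s ∈ unitary R) (ht : t ∈ unitary R) (h : a * s = t * a) :
    star a * t = s * star a :=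
  calc star a * t = s * star (a * s) * t := by
        rw [star_mul, ← mul_assoc, Unitary.mul_star_self_of_mem hs, one_mul]
    _ = s * star a * (star t * t) := by rw [h, star_mul]; simp only [mul_assoc]
    _ = s * star a := by rw [Unitary.star_mul_self_of_mem ht, mul_one]

theorem LinearMap.mem_unitary_of_inner_map_map {𝕜 W : Type*} [RCLike 𝕜] [NormedAddCommGroup W]
    [InnerProductSpace 𝕜 W] [FiniteDimensional 𝕜 W] {U : W →ₗ[𝕜] W}
    (hU : ∀ v w, inner 𝕜 (U v) (U w) = inner 𝕜 v w) : U ∈ unitary (W →ₗ[𝕜] W) := by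
  have hstar : star U * U = 1 :=
    LinearMap.ext fun v => ext_inner_right 𝕜 fun w => by
      rw [Module.End.mul_apply, star_eq_adjoint, adjoint_inner_left, hU, Module.End.one_apply]
  exact Unitary.mem_iff.mpr ⟨hstar, mul_eq_one_comm.mp hstar⟩

section Projection

variable {R M : Type*} [Semiring R] [AddCommMonoid M] [Module R M] {p : Submodule R M}
  {E Q : M →ₗ[R] M}

theorem LinearMap.apply_mem_of_comm_projection (hErange : ∀ v, E v ∈ p)
    (hEfix : ∀ v ∈ p, E v = v) (hEQ : E ∘ₗ Q = Q ∘ₗ E) : ∀ v ∈ p, Q v ∈ p := fun v hv => by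
  have h := hErange (Q v)
  rwa [← comp_apply, hEQ, comp_apply, hEfix v hv] at h

theorem LinearMap.compression_mul_restrict_eq_restrict_mul_compression {T S : M →ₗ[R] M}
    (hEfix : ∀ v ∈ p, E v = v) (hEQ : E ∘ₗ Q = Q ∘ₗ E) (hTS : T ∘ₗ S = Q ∘ₗ T)
    (hETE : ∀ v ∈ p, (E ∘ₗ T ∘ₗ E) v ∈ p) (hS : ∀ v ∈ p, S v ∈ p) (hQ : ∀ v ∈ p, Q v ∈ p) :
    (E ∘ₗ T ∘ₗ E).restrict hETE * S.restrict hS = Q.restrict hQ * (E ∘ₗ T ∘ₗ E).restrict hETE := by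
  ext ⟨v, hv⟩
  have hTSv : T (S v) = Q (T v) := congr($hTS v)
  have hEQv : E (Q (T v)) = Q (E (T v)) := congr($hEQ (T v))
  simp [hEfix v hv, hEfix (S v) (hS v hv), hTSv, hEQv]

end Projection

theorem partial_trace_nonzero_intertwines_general
    (G : Type*) [Group G] (K : Subgroup G)
    (V : Type*) [NormedAddCommGroup V] [InnerProductSpace ℂ V]
    (π : Representation ℂ G V)
    (Vd : Submodule ℂ V) [FiniteDimensional ℂ Vd]
    (E : V →ₗ[ℂ] V)
    (hErange : ∀ v : V, E v ∈ Vd)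
    (hEfix : ∀ v ∈ Vd, E v = v)
    (hEK : ∀ g ∈ K, E ∘ₗ π g = π g ∘ₗ E)
    (hunit : ∀ g ∈ K, ∀ v ∈ Vd, ∀ w ∈ Vd,
      (inner ℂ (π g v) (π g w) : ℂ) = inner ℂ v w)
    (x : G)
    (hres : ∀ v ∈ Vd, (E ∘ₗ π x ∘ₗ E) v ∈ Vd)
    (hΘ : LinearMap.trace ℂ Vd ((E ∘ₗ π x ∘ₗ E).restrict hres) ≠ 0) :
    ∃ φ : V →ₗ[ℂ] V, (∀ v : V, φ v ∈ Vd) ∧ (∃ v ∈ Vd, φ v ≠ 0) ∧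
      ∀ g : G, g ∈ K → x⁻¹ * g * x ∈ K →
        ∀ v ∈ Vd, φ (π g v) = π (x⁻¹ * g * x) (φ v) := by
  set A := (E ∘ₗ π x ∘ₗ E).restrict hres
  have hinv (g) (hg : g ∈ K) : ∀ v ∈ Vd, π g v ∈ Vd :=
    apply_mem_of_comm_projection hErange hEfix (hEK g hg)
  have hunitary (g) (hg : g ∈ K) : (π g).restrict (hinv g hg) ∈ unitary (Vd →ₗ[ℂ] Vd) :=
    mem_unitary_of_inner_map_map fun v w => hunit g hg v v.2 w w.2
  obtain ⟨u, hu⟩ : ∃ u, star A u ≠ 0 := by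
    by_contra! h
    exact hΘ (by rw [star_eq_zero.mp (LinearMap.ext h), map_zero])
  have hE (v) (hv : v ∈ Vd) : E.codRestrict Vd hErange v = ⟨v, hv⟩ := Subtype.ext (hEfix v hv)
  refine ⟨Vd.subtype ∘ₗ star A ∘ₗ E.codRestrict Vd hErange, fun v => (star A _).2,
    ⟨u, u.2, by simpa [hE u u.2] using hu⟩, fun g hg hg' v hv => ?_⟩
  have hπ : π x ∘ₗ π (x⁻¹ * g * x) = π g ∘ₗ π x := by
    rw [← Module.End.mul_eq_comp, ← Module.End.mul_eq_comp, ← map_mul, ← map_mul]; group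
  have hA := compression_mul_restrict_eq_restrict_mul_compression hEfix (hEK g hg) hπ hres
    (hinv _ hg') (hinv g hg)
  have hAstar := star_mul_eq_mul_star_of_mul_eq_mul (hunitary _ hg') (hunitary g hg) hA
  have hAstar_v := congr(Subtype.val ($hAstar ⟨v, hv⟩))
  simp only [Module.End.mul_apply, restrict_apply] at hAstar_v
  simpa only [comp_apply, Submodule.subtype_apply, hE v hv, hE _ (hinv g hg v hv)] using hAstar_v

/-- Proposition `intertwine`: if the partial trace Θ_d(x) = tr(E π(x) E) is
nonzero, where E is the K-equivariant orthogonal projection onto the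
finite-dimensional subspace V_d on which π|_K is unitary, then there is a
nonzero intertwiner in Hom_{K ∩ xKx⁻¹}(d, ˣd), where ˣd(g) = d(x⁻¹gx). -/
theorem partial_trace_nonzero_intertwines
    (G : Type*) [Group G] (K : Subgroup G)
    (V : Type*) [NormedAddCommGroup V] [InnerProductSpace ℂ V]
    (π : Representation ℂ G V)
    (Vd : Submodule ℂ V) [FiniteDimensional ℂ Vd]
    (E : V →ₗ[ℂ] V)
    (hE2 : E ∘ₗ E = E)
    (hErange : ∀ v : V, E v ∈ Vd)
    (hEfix : ∀ v ∈ Vd, E v = v)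
    (hEsa : ∀ v w : V, (inner ℂ (E v) w : ℂ) = inner ℂ v (E w))
    (hEK : ∀ g ∈ K, E ∘ₗ π g = π g ∘ₗ E)
    (hunit : ∀ g ∈ K, ∀ v ∈ Vd, ∀ w ∈ Vd,
      (inner ℂ (π g v) (π g w) : ℂ) = inner ℂ v w)
    (x : G)
    (hres : ∀ v ∈ Vd, (E ∘ₗ π x ∘ₗ E) v ∈ Vd)
    (hΘ : LinearMap.trace ℂ Vd ((E ∘ₗ π x ∘ₗ E).restrict hres) ≠ 0) :
    ∃ φ : V →ₗ[ℂ] V, (∀ v : V, φ v ∈ Vd) ∧ (∃ v ∈ Vd, φ v ≠ 0) ∧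
      ∀ g : G, g ∈ K → x⁻¹ * g * x ∈ K →
        ∀ v ∈ Vd, φ (π g v) = π (x⁻¹ * g * x) (φ v) :=
  partial_trace_nonzero_intertwines_general G K V π Vd E hErange hEfix hEK hunit x hres hΘ
end
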